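/- arXiv:2308.14314 — 5 statements merged into one kernel-verified Lean document; each statement's English description precedes it below -/
import Mathlib

section
/- Let (a_n)_{n∈ℕ} be a nonnegative sequence of real numbers such that the series ∑_{n=0}^∞ n·a_n converges. Then liminf_{n→∞} n²·(log n)·(log log n)·a_n = 0. -/
/-!
If the liminf were positive, then eventually `n * a n ≥ c / (n log n log log n)` for some
`c > 0`. But `∑ 1 / (n log n log log n)` diverges: its terms dominate the increments of
`log log log n`, which tends to infinity. Hence the set of eventual lower bounds of the sequence is
exactly `(-∞, 0]` (the sequence is eventually nonnegative), and its supremum is `0`.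
-/

open Real Filter Finset

lemma Real.log_sub_log_le_div {x y : ℝ} (hx : 0 < x) (hy : 0 < y) :
    log y - log x ≤ (y - x) / x := by
  rw [← log_div hy.ne' hx.ne', sub_div, div_self hx.ne']
  exact log_le_sub_one_of_pos (div_pos hy hx)

lemma Real.one_lt_log_of_three_le {x : ℝ} (hx : 3 ≤ x) : 1 < log x := by
  rw [lt_log_iff_exp_lt (by linarith)]
  exact exp_one_lt_three.trans_le hx

lemma Real.mul_log_mul_log_log_pos {x : ℝ} (hx : 3 ≤ x) : 0 < x * log x * log (log x) := by
  have hlog := one_lt_log_of_three_le hx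
  have := log_pos hlog
  have : 0 < x := by linarith
  positivity

/-- Apply `log y - log x ≤ (y - x) / x` at each of the three levels. -/
lemma log_log_log_succ_sub_le {n : ℕ} (hn : 3 ≤ n) :
    log (log (log (n + 1))) - log (log (log n)) ≤ (n * log n * log (log n))⁻¹ := by
  have hn₃ : (3 : ℝ) ≤ n := by exact_mod_cast hn
  have hn₀ : (0 : ℝ) < n := by linarith
  have hlog : 1 < log n := one_lt_log_of_three_le hn₃
  have hloglog : 0 < log (log n) := log_pos hlog
  have hlog_le : log n ≤ log (n + 1) := log_le_log hn₀ (by linarith)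
  have hloglog_le : log (log n) ≤ log (log (n + 1)) := log_le_log (by linarith) hlog_le
  have h₁ : log (n + 1) - log n ≤ 1 / n := by
    simpa using log_sub_log_le_div hn₀ (by linarith : (0 : ℝ) < n + 1)
  calc log (log (log (n + 1))) - log (log (log n))
      ≤ (log (log (n + 1)) - log (log n)) / log (log n) :=
        log_sub_log_le_div hloglog (by linarith)
    _ ≤ (log (n + 1) - log n) / log n / log (log n) := by
        gcongr; exact log_sub_log_le_div (by linarith) (by linarith)
    _ ≤ 1 / n / log n / log (log n) := by gcongr
    _ = (n * log n * log (log n))⁻¹ := by field_simp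

lemma not_summable_of_tendsto_atTop_of_sub_le {F g : ℕ → ℝ} {N : ℕ}
    (hF : Tendsto F atTop atTop) (hFg : ∀ n ≥ N, F (n + 1) - F n ≤ g n) : ¬ Summable g := by
  intro hg
  have hpartial : Tendsto (fun M => ∑ n ∈ range M, g (n + N)) atTop atTop := by
    refine tendsto_atTop_mono (fun M => ?_)
      ((tendsto_atTop_add_const_right _ (-F N) hF).comp (tendsto_add_atTop_nat N))
    calc F (M + N) + -F N = ∑ n ∈ range M, (F (n + N + 1) - F (n + N)) := by
          simp only [add_right_comm _ N 1]
          rw [sum_range_sub (fun n => F (n + N)), zero_add, sub_eq_add_neg]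
      _ ≤ ∑ n ∈ range M, g (n + N) := sum_le_sum fun n _ => hFg _ (by omega)
  exact not_tendsto_atTop_of_tendsto_nhds
    ((summable_nat_add_iff N).2 hg).hasSum.tendsto_sum_nat hpartial

lemma not_summable_inv_mul_log_mul_log_log :
    ¬ Summable fun n : ℕ => ((n : ℝ) * log n * log (log n))⁻¹ := by
  refine not_summable_of_tendsto_atTop_of_sub_le (F := fun n => log (log (log n))) (N := 3) ?_
    fun n hn => ?_
  · exact tendsto_log_atTop.comp <| tendsto_log_atTop.comp <| tendsto_log_atTop.comp
      tendsto_natCast_atTop_atTop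
  · simpa using log_log_log_succ_sub_le hn

/-- If `(a n)` is a nonnegative real sequence with `∑ n * a n < ∞`, then
`liminf n ^ 2 * log n * log (log n) * a n = 0`. -/
theorem nsa_stmt_1 (a : ℕ → ℝ)
    (hnonneg : ∀ n, 0 ≤ a n)
    (hsum : Summable fun n : ℕ => (n : ℝ) * a n) :
    Filter.liminf
      (fun n : ℕ => (n : ℝ) ^ 2 * Real.log n * Real.log (Real.log n) * a n)
      Filter.atTop = 0 := by
  have hw : ∀ n : ℕ, 3 ≤ n → 0 < (n : ℝ) * log n * log (log n) := fun n hn =>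
    mul_log_mul_log_log_pos (by exact_mod_cast hn)
  rw [liminf_eq, ← csSup_Iic (a := (0 : ℝ))]
  congr 1
  ext c
  rw [Set.mem_Iic]
  refine ⟨fun hc => not_lt.1 fun hc₀ => ?_, fun hc => ?_⟩
  · refine not_summable_inv_mul_log_mul_log_log <| (summable_mul_left_iff hc₀.ne').1 <|
      hsum.of_norm_bounded_eventually_nat ?_
    filter_upwards [hc, eventually_ge_atTop 3] with n hcn hn
    rw [norm_of_nonneg (by have := hw n hn; positivity), ← div_eq_mul_inv,
      div_le_iff₀ (hw n hn)]
    convert hcn using 1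
    ring
  · filter_upwards [eventually_ge_atTop 3] with n hn
    calc c ≤ 0 := hc
      _ ≤ ((n : ℝ) * log n * log (log n)) * n * a n := by
        have := hw n hn; have := hnonneg n; positivity
      _ = _ := by ring
end

section
/- For every k ∈ ℕ, the NSA iterates satisfy δ_{k+1} ≤ δ_k and f(x_{k+1}) ≤ f(y_k) − (2η/3)·‖∇f(y_k)‖². -/
/-!
The iterate `x (k + 1)` is the better of the two gradient steps taken from `y k` and from `x k`.
For an `L`-smooth `f`, the descent lemma `f v ≤ f u + ⟪∇f u, v - u⟫ + L/2 ‖v - u‖²` shows that a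
gradient step of size `η` from any point `u` lowers `f` by at least `η (1 - Lη/2) ‖∇f u‖²`, which is
at least `(2η/3) ‖∇f u‖²` once `η ≤ 2/(3L)`. Both claims follow by comparing with these two steps.
-/

open RealInnerProductSpace Set

section Smooth

variable {E : Type*} [NormedAddCommGroup E] [InnerProductSpace ℝ E] [CompleteSpace E]
  {f : E → ℝ} {L : ℝ}

theorem hasDerivAt_apply_add_smul (hf : Differentiable ℝ f) (u d : E) (t : ℝ) :
    HasDerivAt (fun s : ℝ => f (u + s • d)) ⟪gradient f (u + t • d), d⟫ t := by
  have hline : HasDerivAt (fun s : ℝ => u + s • d) d t := by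
    simpa using ((hasDerivAt_id t).smul_const d).const_add u
  rw [inner_gradient_left]
  exact (hf _).hasFDerivAt.comp_hasDerivAt t hline

theorem apply_le_add_inner_gradient_add_sq (hf : Differentiable ℝ f)
    (hlip : ∀ x x' : E, ‖gradient f x - gradient f x'‖ ≤ L * ‖x - x'‖) (u v : E) :
    f v ≤ f u + ⟪gradient f u, v - u⟫ + L / 2 * ‖v - u‖ ^ 2 := by
  set d := v - u
  let g : ℝ → ℝ := fun t =>
    f (u + t • d) - t * ⟪gradient f u, d⟫ - t ^ 2 * (L / 2 * ‖d‖ ^ 2)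
  have hg : ∀ t, HasDerivAt g
      (⟪gradient f (u + t • d) - gradient f u, d⟫ - t * (L * ‖d‖ ^ 2)) t := by
    intro t
    refine (((hasDerivAt_apply_add_smul hf u d t).sub ((hasDerivAt_id t).mul_const _)).sub
      ((hasDerivAt_pow 2 t).mul_const _)).congr_deriv ?_
    rw [inner_sub_left]
    simp only [Nat.cast_ofNat]
    ring
  have hslope : ∀ t, 0 ≤ t →
      ⟪gradient f (u + t • d) - gradient f u, d⟫ ≤ t * (L * ‖d‖ ^ 2) := by
    intro t ht
    calc ⟪gradient f (u + t • d) - gradient f u, d⟫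
        ≤ ‖gradient f (u + t • d) - gradient f u‖ * ‖d‖ := real_inner_le_norm _ _
      _ ≤ L * ‖t • d‖ * ‖d‖ := by gcongr; simpa using hlip (u + t • d) u
      _ = t * (L * ‖d‖ ^ 2) := by rw [norm_smul, Real.norm_of_nonneg ht]; ring
  have hanti : AntitoneOn g (Icc 0 1) :=
    antitoneOn_of_hasDerivWithinAt_nonpos (convex_Icc 0 1)
      (HasDerivAt.continuousOn fun t _ => hg t) (fun t _ => (hg t).hasDerivWithinAt)
      (fun t ht => sub_nonpos.2 (hslope t (interior_subset ht).1))
  have h01 := hanti (left_mem_Icc.2 zero_le_one) (right_mem_Icc.2 zero_le_one) zero_le_one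
  simp only [g, d, one_smul, zero_smul, add_zero, add_sub_cancel, one_pow, one_mul, zero_mul,
    ne_eq, OfNat.ofNat_ne_zero, not_false_eq_true, zero_pow, sub_zero] at h01
  linarith

theorem apply_sub_smul_gradient_le (hf : Differentiable ℝ f)
    (hlip : ∀ x x' : E, ‖gradient f x - gradient f x'‖ ≤ L * ‖x - x'‖) (η : ℝ) (u : E) :
    f (u - η • gradient f u) ≤ f u - η * (1 - L * η / 2) * ‖gradient f u‖ ^ 2 := by
  have h := apply_le_add_inner_gradient_add_sq hf hlip u (u - η • gradient f u)
  rw [sub_sub_cancel_left, inner_neg_right, real_inner_smul_right, real_inner_self_eq_norm_sq,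
    norm_neg, norm_smul, mul_pow, Real.norm_eq_abs, sq_abs] at h
  linarith

theorem apply_sub_smul_gradient_le_sub_two_thirds (hf : Differentiable ℝ f)
    (hlip : ∀ x x' : E, ‖gradient f x - gradient f x'‖ ≤ L * ‖x - x'‖) (hL : 0 < L) {η : ℝ}
    (hη0 : 0 ≤ η) (hη : η ≤ 2 / (3 * L)) (u : E) :
    f (u - η • gradient f u) ≤ f u - 2 * η / 3 * ‖gradient f u‖ ^ 2 := by
  have hLη : L * η ≤ 2 / 3 := by
    rw [le_div_iff₀ (by positivity)] at hη
    linarith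
  have hrate : 2 * η / 3 ≤ η * (1 - L * η / 2) := by nlinarith
  calc f (u - η • gradient f u) ≤ f u - η * (1 - L * η / 2) * ‖gradient f u‖ ^ 2 :=
        apply_sub_smul_gradient_le hf hlip η u
    _ ≤ f u - 2 * η / 3 * ‖gradient f u‖ ^ 2 := by gcongr

end Smooth

theorem nsa_stmt_3_general (n : ℕ)
    (f : EuclideanSpace ℝ (Fin n) → ℝ)
    (hdiff : Differentiable ℝ f)
    (L : ℝ) (hL : 0 < L)
    (hlip : ∀ x x' : EuclideanSpace ℝ (Fin n),
      ‖gradient f x - gradient f x'‖ ≤ L * ‖x - x'‖)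
    (xstar : EuclideanSpace ℝ (Fin n))
    (η : ℝ) (hη0 : 0 < η) (hη : η ≤ 2 / (3 * L))
    (x y : ℕ → EuclideanSpace ℝ (Fin n))
    (hx : ∀ k, x (k + 1) =
      if f (y k - η • gradient f (y k)) ≤ f (x k - η • gradient f (x k))
      then y k - η • gradient f (y k)
      else x k - η • gradient f (x k))
    :
    ∀ k : ℕ,
      f (x (k + 1)) - f xstar ≤ f (x k) - f xstar ∧
      f (x (k + 1)) ≤ f (y k) - (2 * η / 3) * ‖gradient f (y k)‖ ^ 2 := by
  intro k
  have hbest : f (x (k + 1)) =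
      min (f (y k - η • gradient f (y k))) (f (x k - η • gradient f (x k))) := by
    rw [hx k, apply_ite f, min_def]
  have hstep := apply_sub_smul_gradient_le_sub_two_thirds hdiff hlip hL hη0.le hη
  have hgrad_sq : 0 ≤ 2 * η / 3 * ‖gradient f (x k)‖ ^ 2 := by positivity
  constructor
  · linarith [min_le_right (f (y k - η • gradient f (y k))) (f (x k - η • gradient f (x k))),
      hstep (x k)]
  · linarith [min_le_left (f (y k - η • gradient f (y k))) (f (x k - η • gradient f (x k))),
      hstep (y k)]

theorem nsa_stmt_3 (n : ℕ) (hn : 1 ≤ n)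
    (f : EuclideanSpace ℝ (Fin n) → ℝ)
    (hconv : ConvexOn ℝ Set.univ f)
    (hdiff : Differentiable ℝ f)
    (L : ℝ) (hL : 0 < L)
    (hlip : ∀ x x' : EuclideanSpace ℝ (Fin n),
      ‖gradient f x - gradient f x'‖ ≤ L * ‖x - x'‖)
    (xstar : EuclideanSpace ℝ (Fin n)) (hmin : ∀ u, f xstar ≤ f u)
    (p : ℝ) (hp : 3 ≤ p)
    (η : ℝ) (hη0 : 0 < η) (hη : η ≤ 2 / (3 * L))
    (α : ℕ → ℝ) (hα : ∀ k : ℕ, α k = p / (k + p))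
    (x y z : ℕ → EuclideanSpace ℝ (Fin n))
    (hx0 : x 0 = z 0)
    (hy : ∀ k, y k = (1 - α k) • x k + α k • z k)
    (hx : ∀ k, x (k + 1) =
      if f (y k - η • gradient f (y k)) ≤ f (x k - η • gradient f (x k))
      then y k - η • gradient f (y k)
      else x k - η • gradient f (x k))
    (hz : ∀ k, z (k + 1) = z k - (η / α k) • gradient f (y k))
    :
    ∀ k : ℕ,
      f (x (k + 1)) - f xstar ≤ f (x k) - f xstar ∧
      f (x (k + 1)) ≤ f (y k) - (2 * η / 3) * ‖gradient f (y k)‖ ^ 2 :=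
  nsa_stmt_3_general n f hdiff L hL hlip xstar η hη0 hη x y hx
end

section
/- The NSA iterates satisfy lim_{k→∞} k²·(f(x_k) − f*) = 0 (equivalently, limsup_{k→∞} k²·(f(x_k) − f*) = 0). -/
/-!
With `δ_k = f(x_k) - f*`, the energy `E_k = 2η (k + p - 1)² δ_k + p² ‖z_k - x*‖²` satisfies
`E_{k+1} + 2η k δ_k ≤ E_k`. This combines the gradient inequality of convexity at `y_k` (applied
towards the convex combination `(1 - α_k) x_k + α_k x*`), the descent lemma, which already gives
`f(u - η∇f u) ≤ f u - η/2 ‖∇f u‖²` when `Lη ≤ 1`, and the inequality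
`(k + p) k + k ≤ (k + p - 1)²`, which is where `p ≥ 3` enters. Hence `∑ k δ_k < ∞`.
The comparison step in the definition of `x_{k+1}` makes `δ_k` nonincreasing, so
`k² δ_k ≤ 4 ∑_{k/2 < j ≤ k} j δ_j`, a difference of partial sums of a convergent series.
-/

open Filter Topology InnerProductSpace
open scoped Gradient RealInnerProductSpace

section ConvexSmooth

variable {E : Type*} [NormedAddCommGroup E] [InnerProductSpace ℝ E] [CompleteSpace E]
  {f : E → ℝ}

lemma hasDerivAt_comp_add_smul (hf : Differentiable ℝ f) (a v : E) (t : ℝ) :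
    HasDerivAt (fun s : ℝ => f (a + s • v)) ⟪∇ f (a + t • v), v⟫ t := by
  have hline : HasDerivAt (fun s : ℝ => a + s • v) v t := by
    simpa using ((hasDerivAt_id t).smul_const v).const_add a
  have hgrad : HasFDerivAt f (toDual ℝ E (∇ f (a + t • v))) (a + t • v) :=
    (hf (a + t • v)).hasGradientAt
  have h := hgrad.comp_hasDerivAt t hline
  rw [toDual_apply_apply] at h
  exact h

lemma ConvexOn.add_inner_gradient_le (hconv : ConvexOn ℝ Set.univ f)
    (hf : Differentiable ℝ f) (a b : E) : f a + ⟪∇ f a, b - a⟫ ≤ f b := by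
  have hline : ConvexOn ℝ Set.univ fun s : ℝ => f (a + s • (b - a)) := by
    simpa [Function.comp_def, AffineMap.lineMap_apply, add_comm] using
      hconv.comp_affineMap (AffineMap.lineMap a b : ℝ →ᵃ[ℝ] E)
  have hslope := hline.le_slope_of_hasDerivAt (Set.mem_univ 0) (Set.mem_univ 1) one_pos
    (by simpa only [zero_smul, add_zero] using hasDerivAt_comp_add_smul hf a (b - a) 0)
  simp only [slope_def_field, one_smul, zero_smul, add_zero, add_sub_cancel, sub_zero,
    div_one] at hslope
  linarith

lemma ConvexOn.sub_mul_inner_gradient_le (hconv : ConvexOn ℝ Set.univ f)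
    (hf : Differentiable ℝ f) {α : ℝ} (hα₀ : 0 ≤ α) (hα₁ : α ≤ 1) (x z w : E) :
    f ((1 - α) • x + α • z) - α * ⟪∇ f ((1 - α) • x + α • z), z - w⟫ ≤
      (1 - α) * f x + α * f w := by
  set y := (1 - α) • x + α • z
  have hgrad := hconv.add_inner_gradient_le hf y ((1 - α) • x + α • w)
  have hdir : (1 - α) • x + α • w - y = -(α • (z - w)) := by
    simp only [y, smul_sub]
    abel
  rw [hdir, inner_neg_right, real_inner_smul_right] at hgrad
  have hmix :=
    hconv.2 (Set.mem_univ x) (Set.mem_univ w) (sub_nonneg.2 hα₁) hα₀ (sub_add_cancel 1 α)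
  simp only [smul_eq_mul] at hmix
  linarith

lemma le_add_inner_gradient_add_sq (hf : Differentiable ℝ f) {L : ℝ}
    (hlip : ∀ u w : E, ‖∇ f u - ∇ f w‖ ≤ L * ‖u - w‖) (a b : E) :
    f b ≤ f a + ⟪∇ f a, b - a⟫ + L / 2 * ‖b - a‖ ^ 2 := by
  set v := b - a
  set φ : ℝ → ℝ := fun t => f (a + t • v) - t * ⟪∇ f a, v⟫ - L / 2 * t ^ 2 * ‖v‖ ^ 2
  have hφ' : ∀ t, HasDerivAt φ (⟪∇ f (a + t • v) - ∇ f a, v⟫ - L * t * ‖v‖ ^ 2) t := by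
    intro t
    have hsq := ((hasDerivAt_pow 2 t).const_mul (L / 2)).mul_const (‖v‖ ^ 2)
    refine (((hasDerivAt_comp_add_smul hf a v t).sub
      ((hasDerivAt_id' t).mul_const ⟪∇ f a, v⟫)).sub hsq).congr_deriv ?_
    rw [inner_sub_left]
    push_cast
    ring
  have hφ'_nonpos : ∀ t ∈ interior (Set.Icc (0 : ℝ) 1),
      ⟪∇ f (a + t • v) - ∇ f a, v⟫ - L * t * ‖v‖ ^ 2 ≤ 0 := by
    intro t ht
    rw [interior_Icc] at ht
    have hnorm : ‖(a + t • v) - a‖ = t * ‖v‖ := by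
      rw [add_sub_cancel_left, norm_smul, Real.norm_of_nonneg ht.1.le]
    have := (real_inner_le_norm _ v).trans
      (mul_le_mul_of_nonneg_right (hlip (a + t • v) a) (norm_nonneg v))
    rw [hnorm] at this
    linarith
  have hanti : AntitoneOn φ (Set.Icc 0 1) :=
    antitoneOn_of_hasDerivWithinAt_nonpos (convex_Icc 0 1)
      (fun t _ => (hφ' t).continuousAt.continuousWithinAt)
      (fun t _ => (hφ' t).hasDerivWithinAt) hφ'_nonpos
  have h01 :=
    hanti (Set.left_mem_Icc.2 zero_le_one) (Set.right_mem_Icc.2 zero_le_one) zero_le_one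
  simp only [φ, v, zero_smul, add_zero, zero_mul, sub_zero, one_smul, add_sub_cancel,
    one_mul, one_pow, mul_one] at h01
  linarith

lemma le_sub_half_mul_norm_gradient_sq (hf : Differentiable ℝ f) {L : ℝ}
    (hlip : ∀ u w : E, ‖∇ f u - ∇ f w‖ ≤ L * ‖u - w‖) {η : ℝ} (hη : 0 ≤ η) (hLη : L * η ≤ 1)
    (u : E) : f (u - η • ∇ f u) ≤ f u - η / 2 * ‖∇ f u‖ ^ 2 := by
  have h := le_add_inner_gradient_add_sq hf hlip u (u - η • ∇ f u)
  rw [sub_sub_cancel_left, inner_neg_right, real_inner_smul_right, real_inner_self_eq_norm_sq,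
    norm_neg, norm_smul, Real.norm_of_nonneg hη] at h
  linarith [mul_le_mul_of_nonneg_right hLη (mul_nonneg hη (sq_nonneg ‖∇ f u‖))]

def nsaEnergy (f : E → ℝ) (xstar : E) (η p : ℝ) (k : ℕ) (x z : E) : ℝ :=
  2 * η * (k + p - 1) ^ 2 * (f x - f xstar) + p ^ 2 * ‖z - xstar‖ ^ 2

lemma nsaEnergy_succ_add_le (hconv : ConvexOn ℝ Set.univ f) (hf : Differentiable ℝ f)
    {L : ℝ} (hlip : ∀ u w : E, ‖∇ f u - ∇ f w‖ ≤ L * ‖u - w‖) {p η : ℝ} (hp : 3 ≤ p) (hη : 0 ≤ η)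
    (hLη : L * η ≤ 1) (k : ℕ) {xstar x y z x' z' : E} (hmin : f xstar ≤ f x)
    (hy : y = (1 - p / (k + p)) • x + (p / (k + p)) • z)
    (hx' : f x' ≤ f (y - η • ∇ f y))
    (hz' : z' = z - (η / (p / (k + p))) • ∇ f y) :
    nsaEnergy f xstar η p (k + 1) x' z' + 2 * η * (k * (f x - f xstar)) ≤
      nsaEnergy f xstar η p k x z := by
  set s : ℝ := k + p
  have hs : 0 < s := by positivity
  have hcoup := hconv.sub_mul_inner_gradient_le hf (by positivity)
    (div_le_one_of_le₀ (by simp [s]) hs.le) x z xstar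
  rw [← hy] at hcoup
  set I := ⟪∇ f y, z - xstar⟫
  have hcoup' : s ^ 2 * (f y - f xstar) - s * p * I ≤ s * k * (f x - f xstar) := by
    have hscaled := mul_le_mul_of_nonneg_left hcoup (sq_nonneg s)
    have hlhs : s ^ 2 * (f y - p / s * I) = s ^ 2 * f y - s * p * I := by
      field_simp
    have hrhs : s ^ 2 * ((1 - p / s) * f x + p / s * f xstar) =
        s * k * f x + s * p * f xstar := by
      field_simp
      ring
    linarith
  have hdesc := hx'.trans (le_sub_half_mul_norm_gradient_sq hf hlip hη hLη y)
  have hdist : p ^ 2 * ‖z' - xstar‖ ^ 2 =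
      p ^ 2 * ‖z - xstar‖ ^ 2 - 2 * η * s * p * I + η ^ 2 * s ^ 2 * ‖∇ f y‖ ^ 2 := by
    have hz'' : z' - xstar = (z - xstar) - (η * s / p) • ∇ f y := by
      rw [hz', div_div_eq_mul_div]
      abel
    rw [hz'', norm_sub_sq_real, real_inner_smul_right, norm_smul, real_inner_comm,
      Real.norm_of_nonneg (by positivity)]
    field_simp
    ring
  have hweight : ((s * k + k) - (s - 1) ^ 2) * (f x - f xstar) ≤ 0 :=
    mul_nonpos_of_nonpos_of_nonneg (by nlinarith [(k.cast_nonneg : (0 : ℝ) ≤ k)])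
      (sub_nonneg.2 hmin)
  have hs1 : ((k + 1 : ℕ) : ℝ) + p - 1 = s := by push_cast; ring
  simp only [nsaEnergy, hs1]
  linarith [mul_le_mul_of_nonneg_left hdesc (by positivity : 0 ≤ 2 * η * s ^ 2),
    mul_le_mul_of_nonneg_left hcoup' (by positivity : 0 ≤ 2 * η),
    mul_nonpos_of_nonneg_of_nonpos (by positivity : 0 ≤ 2 * η) hweight]

end ConvexSmooth

section Sequences

open Finset

lemma summable_of_add_le_of_nonneg {V a : ℕ → ℝ} (hV : ∀ k, 0 ≤ V k) (ha : ∀ k, 0 ≤ a k)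
    (h : ∀ k, V (k + 1) + a k ≤ V k) : Summable a := by
  have htel : ∀ K, V K + ∑ j ∈ range K, a j ≤ V 0 := by
    intro K
    induction K with
    | zero => simp
    | succ m ih => linarith [sum_range_succ a m, h m]
  exact summable_of_sum_range_le ha fun K => by linarith [htel K, hV K]

lemma sq_mul_le_four_mul_sum_Ico {δ : ℕ → ℝ} (h0 : ∀ k, 0 ≤ δ k) (hδ : Antitone δ) (k : ℕ) :
    (k : ℝ) ^ 2 * δ k ≤ 4 * ∑ j ∈ Ico (k / 2 + 1) (k + 1), (j : ℝ) * δ j := by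
  have hterm : ∀ j ∈ Ico (k / 2 + 1) (k + 1), ((k / 2 + 1 : ℕ) : ℝ) * δ k ≤ j * δ j := by
    intro j hj
    rw [mem_Ico] at hj
    exact mul_le_mul (by exact_mod_cast hj.1) (hδ (by omega)) (h0 k) j.cast_nonneg
  have hsum := card_nsmul_le_sum _ _ _ hterm
  rw [Nat.card_Ico, nsmul_eq_mul] at hsum
  have hcard : (k : ℝ) ≤ 2 * ((k + 1 - (k / 2 + 1) : ℕ) : ℝ) := by exact_mod_cast (by omega)
  have hleast : (k : ℝ) ≤ 2 * ((k / 2 + 1 : ℕ) : ℝ) := by exact_mod_cast (by omega)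
  have hprod := mul_le_mul hcard hleast k.cast_nonneg (by positivity)
  nlinarith [mul_le_mul_of_nonneg_right hprod (h0 k)]

lemma tendsto_sum_Ico_half_succ_zero {a : ℕ → ℝ} (ha : Summable a) :
    Tendsto (fun k => ∑ j ∈ Ico (k / 2 + 1) (k + 1), a j) atTop (𝓝 0) := by
  have hpartial := ha.hasSum.tendsto_sum_nat
  have hhalf : Tendsto (fun k : ℕ => k / 2 + 1) atTop atTop :=
    tendsto_atTop_atTop.2 fun b => ⟨2 * b, fun k hk => by omega⟩
  have hdiff := (hpartial.comp (tendsto_add_atTop_nat 1)).sub (hpartial.comp hhalf)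
  rw [sub_self] at hdiff
  refine hdiff.congr fun k => ?_
  exact (sum_Ico_eq_sub a (by dsimp only; omega)).symm

lemma tendsto_sq_mul_of_antitone_of_summable {δ : ℕ → ℝ} (h0 : ∀ k, 0 ≤ δ k)
    (hδ : Antitone δ) (hsum : Summable fun k : ℕ => (k : ℝ) * δ k) :
    Tendsto (fun k : ℕ => (k : ℝ) ^ 2 * δ k) atTop (𝓝 0) := by
  have hupper := (tendsto_sum_Ico_half_succ_zero hsum).const_mul 4
  rw [mul_zero] at hupper
  exact tendsto_of_tendsto_of_tendsto_of_le_of_le tendsto_const_nhds hupper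
    (fun k => mul_nonneg (sq_nonneg _) (h0 k)) (sq_mul_le_four_mul_sum_Ico h0 hδ)

end Sequences

theorem nsa_stmt_6_general (n : ℕ)
    (f : EuclideanSpace ℝ (Fin n) → ℝ)
    (hconv : ConvexOn ℝ Set.univ f)
    (hdiff : Differentiable ℝ f)
    (L : ℝ) (hL : 0 < L)
    (hlip : ∀ x x' : EuclideanSpace ℝ (Fin n),
      ‖gradient f x - gradient f x'‖ ≤ L * ‖x - x'‖)
    (xstar : EuclideanSpace ℝ (Fin n)) (hmin : ∀ u, f xstar ≤ f u)
    (p : ℝ) (hp : 3 ≤ p)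
    (η : ℝ) (hη0 : 0 < η) (hη : η ≤ 2 / (3 * L))
    (α : ℕ → ℝ) (hα : ∀ k : ℕ, α k = p / (k + p))
    (x y z : ℕ → EuclideanSpace ℝ (Fin n))
    (hy : ∀ k, y k = (1 - α k) • x k + α k • z k)
    (hx : ∀ k, x (k + 1) =
      if f (y k - η • gradient f (y k)) ≤ f (x k - η • gradient f (x k))
      then y k - η • gradient f (y k)
      else x k - η • gradient f (x k))
    (hz : ∀ k, z (k + 1) = z k - (η / α k) • gradient f (y k))
    :
    Filter.Tendsto (fun k : ℕ => (k : ℝ) ^ 2 * (f (x k) - f xstar))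
      Filter.atTop (nhds 0) := by
  have hLη : L * η ≤ 1 := by
    rw [le_div_iff₀ (by positivity)] at hη
    linarith
  have hchoice : ∀ k, f (x (k + 1)) ≤ f (y k - η • ∇ f (y k)) ∧
      f (x (k + 1)) ≤ f (x k - η • ∇ f (x k)) := by
    intro k
    rw [hx k]
    split_ifs with h
    · exact ⟨le_rfl, h⟩
    · exact ⟨(not_le.1 h).le, le_rfl⟩
  have hgap : ∀ k, 0 ≤ f (x k) - f xstar := fun k => sub_nonneg.2 (hmin (x k))
  have hmono : Antitone fun k => f (x k) - f xstar := by
    refine antitone_nat_of_succ_le fun k => sub_le_sub_right ?_ _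
    exact (hchoice k).2.trans ((le_sub_half_mul_norm_gradient_sq hdiff hlip hη0.le hLη _).trans
      (sub_le_self _ (by positivity)))
  have hsum : Summable fun k : ℕ => 2 * η * (k * (f (x k) - f xstar)) := by
    refine summable_of_add_le_of_nonneg
      (V := fun k => nsaEnergy f xstar η p k (x k) (z k)) (fun k => ?_) (fun k => ?_) fun k => ?_
    · have := hgap k
      unfold nsaEnergy
      positivity
    · have := hgap k
      positivity
    · exact nsaEnergy_succ_add_le hconv hdiff hlip hp hη0.le hLη k (hmin _)
        (by rw [hy k, hα k]) (hchoice k).1 (by rw [hz k, hα k])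
  exact tendsto_sq_mul_of_antitone_of_summable hgap hmono
    ((summable_mul_left_iff (by positivity)).1 hsum)

theorem nsa_stmt_6 (n : ℕ) (hn : 1 ≤ n)
    (f : EuclideanSpace ℝ (Fin n) → ℝ)
    (hconv : ConvexOn ℝ Set.univ f)
    (hdiff : Differentiable ℝ f)
    (L : ℝ) (hL : 0 < L)
    (hlip : ∀ x x' : EuclideanSpace ℝ (Fin n),
      ‖gradient f x - gradient f x'‖ ≤ L * ‖x - x'‖)
    (xstar : EuclideanSpace ℝ (Fin n)) (hmin : ∀ u, f xstar ≤ f u)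
    (p : ℝ) (hp : 3 ≤ p)
    (η : ℝ) (hη0 : 0 < η) (hη : η ≤ 2 / (3 * L))
    (α : ℕ → ℝ) (hα : ∀ k : ℕ, α k = p / (k + p))
    (x y z : ℕ → EuclideanSpace ℝ (Fin n))
    (hx0 : x 0 = z 0)
    (hy : ∀ k, y k = (1 - α k) • x k + α k • z k)
    (hx : ∀ k, x (k + 1) =
      if f (y k - η • gradient f (y k)) ≤ f (x k - η • gradient f (x k))
      then y k - η • gradient f (y k)
      else x k - η • gradient f (x k))
    (hz : ∀ k, z (k + 1) = z k - (η / α k) • gradient f (y k))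
    :
    Filter.Tendsto (fun k : ℕ => (k : ℝ) ^ 2 * (f (x k) - f xstar))
      Filter.atTop (nhds 0) :=
  nsa_stmt_6_general n f hconv hdiff L hL hlip xstar hmin p hp η hη0 hη α hα x y z hy hx hz
end

section
/- Fix k ∈ ℕ and suppose: y_k = (1−α_k)·x_k + α_k·z_k; the descent estimate f(x_{k+1}) ≤ f(y_k) − η·‖g_k‖² holds; the bias bound ‖g_k − ∇f(y_k)‖ ≤ C·ε_k holds; z_k and x* lie in the closed ball B_μ of radius μ centered at the origin; and z_{k+1} is the metric projection of z_k − (η/α_k)·g_k onto B_μ. Then (1/γ_k + α_k/γ_{k+1} − 1/γ_{k+1})·δ_k ≤ Δ_k/γ_k − Δ_{k+1}/γ_{k+1} + 2·C·μ·α_k·ε_k/γ_{k+1}. -/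
/-!
Convexity at `y_k = (1 - α_k) x_k + α_k z_k` bounds `f y_k` by the convex combination of
`f x_k` and `f*` plus `α_k ⟪∇f(y_k), z_k - x*⟫`. Replacing `∇f(y_k)` by `g_k` costs at most
`C ε_k · ‖z_k - x*‖ ≤ 2 C μ ε_k`, and since projecting onto the convex ball does not increase
the distance to `x*`, the term `α_k ⟪g_k, z_k - x*⟫` is paid for by the decrease of
`(γ_{k+1}/2) ‖z - x*‖²` up to `(η/2) ‖g_k‖²`, which the descent estimate absorbs.
Dividing by `γ_{k+1}` gives the claim.
-/

open scoped RealInnerProductSpace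

section Convexity

variable {E : Type*} [NormedAddCommGroup E] [NormedSpace ℝ E] {f : E → ℝ} {f' : E →L[ℝ] ℝ}

theorem ConvexOn.add_fderiv_sub_le (hf : ConvexOn ℝ Set.univ f) {y : E}
    (hd : HasFDerivAt f f' y) (u : E) : f y + f' (u - y) ≤ f u := by
  set φ : ℝ → ℝ := f ∘ AffineMap.lineMap y u
  have hφ : ConvexOn ℝ Set.univ φ := by
    simpa using hf.comp_affineMap (AffineMap.lineMap y u : ℝ →ᵃ[ℝ] E)
  have hd0 : HasFDerivAt f f' (AffineMap.lineMap y u (0 : ℝ)) := by simpa using hd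
  have hφd : HasDerivAt φ (f' (u - y)) 0 := hd0.comp_hasDerivAt 0 AffineMap.hasDerivAt_lineMap
  have := hφ.le_slope_of_hasDerivAt (Set.mem_univ 0) (Set.mem_univ 1) one_pos hφd
  simp [φ, slope_def_field] at this
  rw [map_sub]
  linarith

theorem ConvexOn.le_combo_add_fderiv (hf : ConvexOn ℝ Set.univ f) {x y z : E} {α : ℝ}
    (hα0 : 0 ≤ α) (hα1 : α ≤ 1) (hy : y = (1 - α) • x + α • z) (hd : HasFDerivAt f f' y)
    (u : E) : f y ≤ (1 - α) * f x + α * f u + α * f' (z - u) := by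
  have hx := mul_le_mul_of_nonneg_left (hf.add_fderiv_sub_le hd x) (sub_nonneg.2 hα1)
  have hu := mul_le_mul_of_nonneg_left (hf.add_fderiv_sub_le hd u) hα0
  have hdir : (1 - α) • (x - y) + α • (u - y) = -(α • (z - u)) := by subst hy; module
  have hlin : (1 - α) * f' (x - y) + α * f' (u - y) = -(α * f' (z - u)) := by
    simpa only [map_add, map_smul, map_neg, smul_eq_mul] using congrArg f' hdir
  linarith

end Convexity

section Projection

variable {E : Type*} [NormedAddCommGroup E] [InnerProductSpace ℝ E] {K : Set E} {v p x : E}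

theorem Convex.norm_sub_le_of_forall_norm_sub_le (hK : Convex ℝ K) (hp : p ∈ K)
    (hmin : ∀ u ∈ K, ‖v - p‖ ≤ ‖v - u‖) (hx : x ∈ K) : ‖p - x‖ ≤ ‖v - x‖ := by
  have hbdd : BddBelow (Set.range fun w : K => ‖v - w‖) :=
    ⟨0, by rintro _ ⟨w, rfl⟩; positivity⟩
  have : Nonempty K := ⟨⟨p, hp⟩⟩
  have hinf : ‖v - p‖ = ⨅ w : K, ‖v - w‖ :=
    le_antisymm (le_ciInf fun w => hmin w w.2) (ciInf_le hbdd ⟨p, hp⟩)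
  have hobtuse : ⟪v - p, x - p⟫ ≤ 0 :=
    (norm_eq_iInf_iff_real_inner_le_zero hK hp).1 hinf x hx
  have hexp : ‖v - x‖ ^ 2 = ‖v - p‖ ^ 2 - 2 * ⟪v - p, x - p⟫ + ‖p - x‖ ^ 2 := by
    rw [show v - x = (v - p) - (x - p) by abel, norm_sub_sq_real, norm_sub_rev x p]
  exact (sq_le_sq₀ (norm_nonneg _) (norm_nonneg _)).1 (by nlinarith [sq_nonneg ‖v - p‖])

theorem Convex.norm_sub_sq_le_of_projected_step (hK : Convex ℝ K) (hp : p ∈ K) {z g : E}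
    {c : ℝ} (hmin : ∀ u ∈ K, ‖z - c • g - p‖ ≤ ‖z - c • g - u‖) (hx : x ∈ K) :
    ‖p - x‖ ^ 2 ≤ ‖z - x‖ ^ 2 - 2 * c * ⟪g, z - x⟫ + c ^ 2 * ‖g‖ ^ 2 := by
  have hexp : ‖z - c • g - x‖ ^ 2 = ‖z - x‖ ^ 2 - 2 * c * ⟪g, z - x⟫ + c ^ 2 * ‖g‖ ^ 2 := by
    rw [show z - c • g - x = (z - x) - c • g by abel, norm_sub_sq_real, norm_smul,
      real_inner_smul_right, real_inner_comm, mul_pow, Real.norm_eq_abs, sq_abs]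
    ring
  rw [← hexp]
  exact pow_le_pow_left₀ (norm_nonneg _) (hK.norm_sub_le_of_forall_norm_sub_le hp hmin hx) 2

theorem inner_le_norm_mul_two_mul_of_mem_closedBall {z x : E} {μ : ℝ}
    (hz : z ∈ Metric.closedBall 0 μ) (hx : x ∈ Metric.closedBall 0 μ) (w : E) :
    ⟪w, z - x⟫ ≤ ‖w‖ * (2 * μ) := by
  rw [mem_closedBall_zero_iff] at hz hx
  have hdiam : ‖z - x‖ ≤ 2 * μ := by linarith [norm_sub_le z x]
  exact (real_inner_le_norm _ _).trans (mul_le_mul_of_nonneg_left hdiam (norm_nonneg _))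

end Projection

theorem lyapunov_step_of_le {γ γ' α δ δ' a b r : ℝ} (hγ : 0 < γ) (hγ' : 0 < γ')
    (h : (α - 1) * δ + δ' - r ≤ γ' / 2 * a - γ' / 2 * b) :
    (1 / γ + α / γ' - 1 / γ') * δ ≤ (γ / 2 * a + δ) / γ - (γ' / 2 * b + δ') / γ' + r / γ' := by
  rw [← sub_nonneg]
  have hrearr : (γ / 2 * a + δ) / γ - (γ' / 2 * b + δ') / γ' + r / γ'
      - (1 / γ + α / γ' - 1 / γ') * δ
      = (γ' / 2 * a - γ' / 2 * b - ((α - 1) * δ + δ' - r)) / γ' := by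
    field_simp
    ring
  rw [hrearr]
  exact div_nonneg (sub_nonneg.2 h) hγ'.le

theorem nsa_stmt_11_general (n : ℕ)
    (f : EuclideanSpace ℝ (Fin n) → ℝ)
    (hconv : ConvexOn ℝ Set.univ f)
    (hdiff : Differentiable ℝ f)
    (xstar : EuclideanSpace ℝ (Fin n))
    (η : ℝ) (hη : 0 < η)
    (αk : ℝ) (hαk0 : 0 < αk) (hαk1 : αk ≤ 1)
    (εk : ℝ)
    (C : ℝ)
    (μ : ℝ)
    (xk xk1 yk zk zk1 gk : EuclideanSpace ℝ (Fin n))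
    (γk γk1 : ℝ) (hγk : 0 < γk) (hγk1 : γk1 = αk ^ 2 / η)
    (hy : yk = (1 - αk) • xk + αk • zk)
    (hdesc : f xk1 ≤ f yk - η * ‖gk‖ ^ 2)
    (hbias : ‖gk - gradient f yk‖ ≤ C * εk)
    (hzk : zk ∈ Metric.closedBall (0 : EuclideanSpace ℝ (Fin n)) μ)
    (hxstar : xstar ∈ Metric.closedBall (0 : EuclideanSpace ℝ (Fin n)) μ)
    (hzk1mem : zk1 ∈ Metric.closedBall (0 : EuclideanSpace ℝ (Fin n)) μ)
    (hzk1proj : ∀ u ∈ Metric.closedBall (0 : EuclideanSpace ℝ (Fin n)) μ,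
      ‖zk - (η / αk) • gk - zk1‖ ≤ ‖zk - (η / αk) • gk - u‖) :
    (1 / γk + αk / γk1 - 1 / γk1) * (f xk - f xstar) ≤
      (γk / 2 * ‖zk - xstar‖ ^ 2 + (f xk - f xstar)) / γk
        - (γk1 / 2 * ‖zk1 - xstar‖ ^ 2 + (f xk1 - f xstar)) / γk1
        + 2 * C * μ * αk * εk / γk1 := by
  have hγk1pos : 0 < γk1 := by rw [hγk1]; positivity
  have hconvex := hconv.le_combo_add_fderiv hαk0.le hαk1 hy
    (hasGradientAt_iff_hasFDerivAt.1 (hdiff yk).hasGradientAt) xstar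
  rw [InnerProductSpace.toDual_apply_apply] at hconvex
  have hproj :=
    (convex_closedBall _ μ).norm_sub_sq_le_of_projected_step hzk1mem hzk1proj hxstar
  have hscale : γk1 / 2 * (‖zk - xstar‖ ^ 2 - 2 * (η / αk) * ⟪gk, zk - xstar⟫
      + (η / αk) ^ 2 * ‖gk‖ ^ 2) =
      γk1 / 2 * ‖zk - xstar‖ ^ 2 - αk * ⟪gk, zk - xstar⟫ + η / 2 * ‖gk‖ ^ 2 := by
    rw [hγk1]; field_simp
  have hgap : ⟪gradient f yk - gk, zk - xstar⟫ ≤ C * εk * (2 * μ) := by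
    refine (inner_le_norm_mul_two_mul_of_mem_closedBall hzk hxstar _).trans ?_
    rw [norm_sub_rev]
    exact mul_le_mul_of_nonneg_right hbias (by linarith [Metric.nonempty_closedBall.1 ⟨_, hzk⟩])
  rw [inner_sub_left] at hgap
  refine lyapunov_step_of_le hγk hγk1pos ?_
  linarith [mul_le_mul_of_nonneg_left hproj (by positivity : (0 : ℝ) ≤ γk1 / 2),
    mul_le_mul_of_nonneg_left hgap hαk0.le, mul_nonneg hη.le (sq_nonneg ‖gk‖)]

/-- One-step Lyapunov inequality for the NSA algorithm with inexact gradients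
and projection onto the ball `B_μ`. -/
theorem nsa_stmt_11 (n : ℕ) (hn : 1 ≤ n)
    (f : EuclideanSpace ℝ (Fin n) → ℝ)
    (hconv : ConvexOn ℝ Set.univ f)
    (hdiff : Differentiable ℝ f)
    (xstar : EuclideanSpace ℝ (Fin n)) (hmin : ∀ u, f xstar ≤ f u)
    (η : ℝ) (hη : 0 < η)
    (αk : ℝ) (hαk0 : 0 < αk) (hαk1 : αk ≤ 1)
    (εk : ℝ) (hεk : 0 ≤ εk)
    (C : ℝ) (hC : 0 < C)
    (μ : ℝ) (hμ : 0 < μ)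
    (xk xk1 yk zk zk1 gk : EuclideanSpace ℝ (Fin n))
    (γk γk1 : ℝ) (hγk : 0 < γk) (hγk1 : γk1 = αk ^ 2 / η)
    (hy : yk = (1 - αk) • xk + αk • zk)
    (hdesc : f xk1 ≤ f yk - η * ‖gk‖ ^ 2)
    (hbias : ‖gk - gradient f yk‖ ≤ C * εk)
    (hzk : zk ∈ Metric.closedBall (0 : EuclideanSpace ℝ (Fin n)) μ)
    (hxstar : xstar ∈ Metric.closedBall (0 : EuclideanSpace ℝ (Fin n)) μ)
    (hzk1mem : zk1 ∈ Metric.closedBall (0 : EuclideanSpace ℝ (Fin n)) μ)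
    (hzk1proj : ∀ u ∈ Metric.closedBall (0 : EuclideanSpace ℝ (Fin n)) μ,
      ‖zk - (η / αk) • gk - zk1‖ ≤ ‖zk - (η / αk) • gk - u‖) :
    (1 / γk + αk / γk1 - 1 / γk1) * (f xk - f xstar) ≤
      (γk / 2 * ‖zk - xstar‖ ^ 2 + (f xk - f xstar)) / γk
        - (γk1 / 2 * ‖zk1 - xstar‖ ^ 2 + (f xk1 - f xstar)) / γk1
        + 2 * C * μ * αk * εk / γk1 :=
  nsa_stmt_11_general n f hconv hdiff xstar η hη αk hαk0 hαk1 εk C μ xk xk1 yk zk zk1 gk γk γk1 hγk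
    hγk1 hy hdesc hbias hzk hxstar hzk1mem hzk1proj
end

section
/- The proximal NSA iterates satisfy: there exists a constant c ≥ 0 (depending only on the initialization, p, s and η) such that f(x_k) − f* ≤ c/k² for all k ≥ 1. -/
/-!
Lyapunov argument. Adding the subgradient inequalities at `x_{k+1}` tested against `x_k` and `x*`
with weights `1 - α` and `α`, and expanding `‖z_{k+1} - x*‖²`, gives
`δ_{k+1} + α² r_{k+1} ≤ (1 - α) δ_k + α² r_k` for `δ_k = f(x_k) - f*` and
`r_k = ‖z_k - x*‖² / (2η)`; the `‖g‖²` terms cancel up to `(s - η/2)‖g‖² ≥ 0`.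
Dividing by `α_k² = (p / (k + p))²` and using `(1 - α_k) / α_k² ≤ 1 / α_{k-1}²` for `p ≥ 2`, the energy
`((k - 1 + p) / p)² δ_k + r_k` is nonincreasing from `k = 1` on, and `α_0 = 1` bounds its first
value by `r_0`. Hence `δ_k ≤ p² r_0 / k²`.
-/

open scoped RealInnerProductSpace

section ProximalStep

variable {E : Type*} [NormedAddCommGroup E] [InnerProductSpace ℝ E]

theorem mul_sq_norm_sub_smul_sub {a η : ℝ} (ha : a ≠ 0) (hη : η ≠ 0) (z g w : E) :
    a ^ 2 * (‖z - (η / a) • g - w‖ ^ 2 / (2 * η)) =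
      a ^ 2 * (‖z - w‖ ^ 2 / (2 * η)) + a * ⟪g, w - z⟫ + η / 2 * ‖g‖ ^ 2 := by
  have hsplit : z - (η / a) • g - w = (z - w) - (η / a) • g := by abel
  have hswap : ⟪z - w, g⟫ = -⟪g, w - z⟫ := by
    rw [real_inner_comm, ← inner_neg_right, neg_sub]
  rw [hsplit, norm_sub_sq_real, real_inner_smul_right, norm_smul, mul_pow,
    Real.norm_eq_abs, sq_abs, hswap]
  field_simp
  ring

variable {f : E → ℝ} {x z g xstar : E} {a s : ℝ}

theorem subgradient_step_bound (ha0 : 0 ≤ a) (ha1 : a ≤ 1)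
    (hsub : ∀ u, f ((1 - a) • x + a • z - s • g) +
      ⟪g, u - ((1 - a) • x + a • z - s • g)⟫ ≤ f u) :
    f ((1 - a) • x + a • z - s • g) + s * ‖g‖ ^ 2 + a * ⟪g, xstar - z⟫ ≤
      (1 - a) * f x + a * f xstar := by
  set x' := (1 - a) • x + a • z - s • g with hx'
  have hvec : (1 - a) • (x - x') + a • (xstar - x') = s • g + a • (xstar - z) := by
    rw [hx']; module
  have hinner : (1 - a) * ⟪g, x - x'⟫ + a * ⟪g, xstar - x'⟫ =
      s * ‖g‖ ^ 2 + a * ⟪g, xstar - z⟫ := by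
    simpa only [inner_add_right, real_inner_smul_right, real_inner_self_eq_norm_sq]
      using congrArg (fun v => ⟪g, v⟫) hvec
  linarith [mul_le_mul_of_nonneg_left (hsub x) (sub_nonneg.mpr ha1),
    mul_le_mul_of_nonneg_left (hsub xstar) ha0]

theorem proximal_step_lyapunov {η : ℝ} (ha0 : 0 < a) (ha1 : a ≤ 1) (hη : 0 < η)
    (hsη : η / 2 ≤ s)
    (hsub : ∀ u, f ((1 - a) • x + a • z - s • g) +
      ⟪g, u - ((1 - a) • x + a • z - s • g)⟫ ≤ f u) :
    f ((1 - a) • x + a • z - s • g) - f xstar +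
        a ^ 2 * (‖z - (η / a) • g - xstar‖ ^ 2 / (2 * η)) ≤
      (1 - a) * (f x - f xstar) + a ^ 2 * (‖z - xstar‖ ^ 2 / (2 * η)) := by
  rw [mul_sq_norm_sub_smul_sub ha0.ne' hη.ne']
  linarith [subgradient_step_bound (xstar := xstar) ha0.le ha1 hsub,
    mul_le_mul_of_nonneg_right hsη (sq_nonneg ‖g‖)]

end ProximalStep

theorem lyapunov_bound_of_step {p : ℝ} (hp : 2 ≤ p) {δ r : ℕ → ℝ} (hδ : ∀ k, 0 ≤ δ k)
    (hstep : ∀ k : ℕ, δ (k + 1) + (p / (k + p)) ^ 2 * r (k + 1) ≤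
      (1 - p / (k + p)) * δ k + (p / (k + p)) ^ 2 * r k) (k : ℕ) :
    ((k + p) / p) ^ 2 * δ (k + 1) + r (k + 1) ≤ r 0 := by
  induction k with
  | zero => simpa [div_self (by positivity : p ≠ 0)] using hstep 0
  | succ k ih =>
    have hkp : (0 : ℝ) < k + 1 + p := by positivity
    have hinv : ((k + 1 + p) / p) ^ 2 * (p / (k + 1 + p)) ^ 2 = 1 := by
      rw [← mul_pow, div_mul_div_cancel₀ (by positivity), div_self hkp.ne', one_pow]
    -- `(m + p) m ≤ (m - 1 + p)²` for `m = k + 1`, which is where `p ≥ 2` enters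
    have hgrowth : ((k + 1 + p) / p) ^ 2 * (1 - p / (k + 1 + p)) ≤ ((k + p) / p) ^ 2 := by
      rw [div_pow, div_pow, ← mul_div_right_comm, one_sub_div hkp.ne']
      gcongr
      field_simp
      nlinarith
    have hstep' := hstep (k + 1)
    push_cast at hstep' ⊢
    calc ((k + 1 + p) / p) ^ 2 * δ (k + 1 + 1) + r (k + 1 + 1)
        = ((k + 1 + p) / p) ^ 2 * (δ (k + 1 + 1) + (p / (k + 1 + p)) ^ 2 * r (k + 1 + 1)) := by
          linear_combination -r (k + 1 + 1) * hinv
      _ ≤ ((k + 1 + p) / p) ^ 2 *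
            ((1 - p / (k + 1 + p)) * δ (k + 1) + (p / (k + 1 + p)) ^ 2 * r (k + 1)) := by
          gcongr
      _ = ((k + 1 + p) / p) ^ 2 * (1 - p / (k + 1 + p)) * δ (k + 1) + r (k + 1) := by
          linear_combination r (k + 1) * hinv
      _ ≤ ((k + p) / p) ^ 2 * δ (k + 1) + r (k + 1) := by gcongr; exact hδ _
      _ ≤ r 0 := ih

theorem le_div_sq_of_lyapunov_step {p : ℝ} (hp : 2 ≤ p) {δ r : ℕ → ℝ} (hδ : ∀ k, 0 ≤ δ k)
    (hr : ∀ k, 0 ≤ r k)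
    (hstep : ∀ k : ℕ, δ (k + 1) + (p / (k + p)) ^ 2 * r (k + 1) ≤
      (1 - p / (k + p)) * δ k + (p / (k + p)) ^ 2 * r k) {k : ℕ} (hk : 1 ≤ k) :
    δ k ≤ p ^ 2 * r 0 / k ^ 2 := by
  obtain ⟨k, rfl⟩ := Nat.exists_eq_add_of_le' hk
  have hbound := lyapunov_bound_of_step hp hδ hstep k
  have hmono : ((k + 1 : ℕ) / p : ℝ) ^ 2 ≤ ((k + p) / p) ^ 2 := by
    push_cast; gcongr; linarith
  rw [le_div_iff₀ (by positivity)]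
  calc δ (k + 1) * ((k + 1 : ℕ) : ℝ) ^ 2 = p ^ 2 * (((k + 1 : ℕ) / p : ℝ) ^ 2 * δ (k + 1)) := by
        field_simp
    _ ≤ p ^ 2 * r 0 := by
        gcongr
        nlinarith [mul_le_mul_of_nonneg_right hmono (hδ (k + 1)), hr (k + 1)]

theorem nsa_stmt_13_general (n : ℕ)
    (f : EuclideanSpace ℝ (Fin n) → ℝ)
    (xstar : EuclideanSpace ℝ (Fin n)) (hmin : ∀ u, f xstar ≤ f u)
    (p : ℝ) (hp : 3 ≤ p)
    (s η : ℝ) (hη : 0 < η) (hsη : η / 2 ≤ s)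
    (α : ℕ → ℝ) (hα : ∀ k : ℕ, α k = p / (k + p))
    (x z g : ℕ → EuclideanSpace ℝ (Fin n))
    (hsubgrad : ∀ k : ℕ, ∀ u,
      f (x (k + 1)) + ⟪g (k + 1), u - x (k + 1)⟫ ≤ f u)
    (hx : ∀ k, x (k + 1) = (1 - α k) • x k + α k • z k - s • g (k + 1))
    (hz : ∀ k, z (k + 1) = z k - (η / α k) • g (k + 1)) :
    ∃ c : ℝ, 0 ≤ c ∧ ∀ k : ℕ, 1 ≤ k → f (x k) - f xstar ≤ c / (k : ℝ) ^ 2 := by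
  refine ⟨p ^ 2 * (‖z 0 - xstar‖ ^ 2 / (2 * η)), by positivity, fun k hk => ?_⟩
  refine le_div_sq_of_lyapunov_step (δ := fun k => f (x k) - f xstar)
    (r := fun k => ‖z k - xstar‖ ^ 2 / (2 * η)) (by linarith)
    (fun k => sub_nonneg.mpr (hmin _)) (fun k => by positivity) (fun k => ?_) hk
  have hkp : (0 : ℝ) < k + p := by positivity
  have hstep := proximal_step_lyapunov (f := f) (x := x k) (z := z k) (g := g (k + 1))
    (xstar := xstar) (a := p / (k + p)) (by positivity)
    ((div_le_one hkp).mpr (by linarith [k.cast_nonneg (α := ℝ)])) hη hsη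
    (by simpa only [← hα k, ← hx k] using hsubgrad k)
  simpa only [← hα k, ← hx k, ← hz k] using hstep

/-- The proximal version of the NSA algorithm achieves an `O(1/k²)` rate:
`f (x k) - f* ≤ c / k²` for all `k ≥ 1`, for some constant `c ≥ 0`. -/
theorem nsa_stmt_13 (n : ℕ) (hn : 1 ≤ n)
    (f : EuclideanSpace ℝ (Fin n) → ℝ)
    (hconv : ConvexOn ℝ Set.univ f)
    (xstar : EuclideanSpace ℝ (Fin n)) (hmin : ∀ u, f xstar ≤ f u)
    (p : ℝ) (hp : 3 ≤ p)
    (s η : ℝ) (hs : 0 < s) (hη : 0 < η) (hsη : η / 2 ≤ s)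
    (α : ℕ → ℝ) (hα : ∀ k : ℕ, α k = p / (k + p))
    (x z g : ℕ → EuclideanSpace ℝ (Fin n))
    (hx0 : x 0 = z 0)
    (hsubgrad : ∀ k : ℕ, ∀ u,
      f (x (k + 1)) + ⟪g (k + 1), u - x (k + 1)⟫ ≤ f u)
    (hx : ∀ k, x (k + 1) = (1 - α k) • x k + α k • z k - s • g (k + 1))
    (hz : ∀ k, z (k + 1) = z k - (η / α k) • g (k + 1)) :
    ∃ c : ℝ, 0 ≤ c ∧ ∀ k : ℕ, 1 ≤ k → f (x k) - f xstar ≤ c / (k : ℝ) ^ 2 :=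
  nsa_stmt_13_general n f xstar hmin p hp s η hη hsη α hα x z g hsubgrad hx hz
end
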